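/- arXiv:1706.08949 — 4 statements merged into one kernel-verified Lean document; each statement's English description precedes it below -/
import Mathlib

section
/- Let L ≥ 1 and β the positive root of β² + Lβ = 1. Then for every n ≥ 0, the fractional part of β^{2n+1} equals the fractional part of q_{2n+1}·β, and the fractional part of β^{2n} (for n ≥ 1) equals the fractional part of −q_{2n}·β, where (q_i) are the continued fraction convergent denominators of β. -/
theorem stmt_6 (L : ℕ) (hL : 1 ≤ L) (β : ℝ) (hβ0 : 0 < β) (hβ1 : β < 1)
    (h : β ^ 2 + (L : ℝ) * β = 1)
    (q : ℕ → ℕ) (hq0 : q 0 = 0) (hq1 : q 1 = 1)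
    (hqrec : ∀ i, q (i + 2) = L * q (i + 1) + q i) :
    (∀ n : ℕ, Int.fract (β ^ (2 * n + 1)) = Int.fract ((q (2 * n + 1) : ℝ) * β)) ∧
    (∀ n : ℕ, 1 ≤ n → Int.fract (β ^ (2 * n)) = Int.fract (-(q (2 * n) : ℝ) * β)) := by
  have hb2 : β ^ 2 = 1 - (L : ℝ) * β := by linarith
  have key : ∀ n : ℕ,
      β ^ (n + 1) = (-1 : ℝ) ^ (n + 1) * q n + (-1 : ℝ) ^ n * q (n + 1) * β := by
    intro n
    induction n with
    | zero => simp [hq0, hq1]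
    | succ n ih =>
      have : β ^ (n + 2) = β ^ (n + 1) * β := by ring
      rw [this, ih, hqrec n]
      push_cast
      linear_combination ((-1:ℝ)^n * (q (n+1) : ℝ)) * hb2
  constructor
  · intro n
    have hk := key (2 * n)
    have h1 : (-1 : ℝ) ^ (2 * n) = 1 := by simp [pow_mul]
    have h2 : (-1 : ℝ) ^ (2 * n + 1) = -1 := by simp [pow_succ, h1]
    rw [hk, h1, h2]
    have : (-1 : ℝ) * q (2 * n) + 1 * q (2 * n + 1) * β
        = (q (2 * n + 1) : ℝ) * β + ((-(q (2 * n) : ℤ) : ℤ) : ℝ) := by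
      push_cast; ring
    rw [this, Int.fract_add_intCast]
  · rintro n hn
    obtain ⟨m, rfl⟩ := Nat.exists_eq_add_of_le hn
    have hk := key (2 * m + 1)
    have h1 : (-1 : ℝ) ^ (2 * m + 1 + 1) = 1 := by
      have : 2 * m + 1 + 1 = 2 * (m + 1) := by ring
      rw [this]; simp [pow_mul]
    have h2 : (-1 : ℝ) ^ (2 * m + 1) = -1 := by simp [pow_succ, pow_mul]
    have he : 2 * (1 + m) = 2 * m + 1 + 1 := by ring
    rw [he, hk, h1, h2]
    have : (1 : ℝ) * q (2 * m + 1) + (-1) * q (2 * m + 1 + 1) * β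
        = (-(q (2 * m + 1 + 1) : ℝ)) * β + ((q (2 * m + 1) : ℤ) : ℝ) := by
      push_cast; ring
    rw [this, Int.fract_add_intCast]
end

section
/- Let L, S be integers with L ≥ S ≥ 2 and β the positive root of Sβ² + Lβ = 1. Then for every α of the form α = Σ_{k=1}^n α_k β^k with integers 0 ≤ α_k ≤ L and α_n ≠ 0, the number β^{n+1} is not of the form {mα} for any integer m, where {·} denotes fractional part. In particular, the LS-sequence is not a reordering of any (symmetrized) Kronecker sequence. -/
private lemma pow_rep (γ : ℝ) (c d : ℤ) (hγ : γ ^ 2 = c * γ + d) (i : ℕ) :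
    ∃ x y : ℤ, γ ^ i = x + y * γ := by
  induction i with
  | zero => exact ⟨1, 0, by simp⟩
  | succ i ih =>
    obtain ⟨x, y, hxy⟩ := ih
    refine ⟨y * d, x + y * c, ?_⟩
    push_cast
    linear_combination γ * hxy + (y : ℝ) * hγ

private lemma sum_rep (γ : ℝ) (s : Finset ℕ) (f : ℕ → ℝ)
    (hf : ∀ k ∈ s, ∃ x y : ℤ, f k = x + y * γ) :
    ∃ x y : ℤ, ∑ k ∈ s, f k = x + y * γ := by
  classical
  induction s using Finset.induction with
  | empty => exact ⟨0, 0, by simp⟩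
  | insert k s' hks ih =>
    obtain ⟨x, y, hxy⟩ := hf k (Finset.mem_insert_self k s')
    obtain ⟨x', y', hxy'⟩ := ih (fun j hj => hf j (Finset.mem_insert_of_mem hj))
    refine ⟨x + x', y + y', ?_⟩
    rw [Finset.sum_insert hks, hxy, hxy']
    push_cast
    ring

private lemma not_square (L S : ℕ) (hS : 2 ≤ S) (hLS : S ≤ L) :
    ¬ IsSquare (L ^ 2 + 4 * S) := by
  rintro ⟨r, hr⟩
  have h1 : L < r := by
    by_contra hc
    push_neg at hc
    nlinarith [Nat.mul_le_mul hc hc]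
  have h2 : r < L + 2 := by
    by_contra hc
    push_neg at hc
    nlinarith [Nat.mul_le_mul hc hc]
  have h3 : r = L + 1 := by omega
  subst h3
  have h4 : 4 * S = 2 * L + 1 := by nlinarith
  omega

set_option maxHeartbeats 1000000 in
theorem stmt_8 (L S : ℕ) (hS : 2 ≤ S) (hLS : S ≤ L) (β : ℝ) (hβ : 0 < β)
    (h : (S : ℝ) * β ^ 2 + (L : ℝ) * β = 1)
    (n : ℕ) (hn : 1 ≤ n) (a : ℕ → ℕ) (ha : ∀ k, a k ≤ L) (han : a n ≠ 0)
    (α : ℝ) (hα : α = ∑ k ∈ Finset.Icc 1 n, (a k : ℝ) * β ^ k) :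
    ∀ m : ℤ, Int.fract ((m : ℝ) * α) ≠ β ^ (n + 1) := by
  intro m hfr
  have hβne : β ≠ 0 := ne_of_gt hβ
  set γ := β⁻¹ with hγdef
  have hβγ : β * γ = 1 := mul_inv_cancel₀ hβne
  have hγpos : (0 : ℝ) < γ := inv_pos.mpr hβ
  have hγ2 : γ ^ 2 = (L : ℝ) * γ + S := by
    have hβ2 : β ^ 2 ≠ 0 := pow_ne_zero 2 hβne
    rw [hγdef]
    field_simp
    ring_nf
    nlinarith [h, hβγ, sq_nonneg β]
  have hLpos : (0 : ℝ) < L := by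
    have : (2 : ℝ) ≤ L := by exact_mod_cast le_trans hS hLS
    linarith
  have hγL : (L : ℝ) < γ := by
    have hSβ : (0 : ℝ) < S * β ^ 2 := by positivity
    have : (L : ℝ) * β < 1 := by linarith
    rw [hγdef, inv_eq_one_div]
    exact (lt_div_iff₀ hβ).mpr (by linarith)
  -- fractional part equation
  set j : ℤ := ⌊(m : ℝ) * α⌋ with hjdef
  have hj : (m : ℝ) * α = j + β ^ (n + 1) := by
    have h0 := Int.floor_add_fract ((m : ℝ) * α)
    rw [hfr] at h0
    linarith [h0]
  -- key identity
  have hβγn : β ^ (n + 1) * γ ^ (n + 1) = 1 := by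
    rw [← mul_pow, hβγ, one_pow]
  have h1 : (m : ℝ) * α * γ ^ (n + 1) = (j : ℝ) * γ ^ (n + 1) + 1 := by
    rw [hj]; linear_combination hβγn
  have hterm : ∀ k ∈ Finset.Icc 1 n, (a k : ℝ) * β ^ k * γ ^ (n + 1)
      = (a k : ℝ) * γ ^ (n + 1 - k) := by
    intro k hk
    have hk2 : k ≤ n := (Finset.mem_Icc.mp hk).2
    have hsplit : γ ^ (n + 1) = γ ^ (n + 1 - k) * γ ^ k := by
      rw [← pow_add]; congr 1; omega
    have hβγk : β ^ k * γ ^ k = 1 := by rw [← mul_pow, hβγ, one_pow]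
    rw [hsplit]
    linear_combination (a k : ℝ) * γ ^ (n + 1 - k) * hβγk
  have hsum : α * γ ^ (n + 1) = ∑ k ∈ Finset.Icc 1 n, (a k : ℝ) * γ ^ (n + 1 - k) := by
    rw [hα, Finset.sum_mul]
    exact Finset.sum_congr rfl hterm
  have hsum2 : ∑ k ∈ Finset.Icc 1 n, (a k : ℝ) * γ ^ (n + 1 - k)
      = γ * ∑ k ∈ Finset.Icc 1 n, (a k : ℝ) * γ ^ (n - k) := by
    rw [Finset.mul_sum]
    refine Finset.sum_congr rfl (fun k hk => ?_)
    have hk2 : k ≤ n := (Finset.mem_Icc.mp hk).2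
    have : n + 1 - k = (n - k) + 1 := by omega
    rw [this, pow_succ]; ring
  have hmain : γ * ((m : ℝ) * (∑ k ∈ Finset.Icc 1 n, (a k : ℝ) * γ ^ (n - k))
      - (j : ℝ) * γ ^ n) = 1 := by
    have : (m : ℝ) * (γ * ∑ k ∈ Finset.Icc 1 n, (a k : ℝ) * γ ^ (n - k))
        = (j : ℝ) * γ ^ (n + 1) + 1 := by
      rw [← hsum2, ← hsum, ← h1]; ring
    rw [pow_succ] at this
    linear_combination this
  -- representation in ℤ + ℤγ
  obtain ⟨x, y, hxy⟩ : ∃ x y : ℤ, ∑ k ∈ Finset.Icc 1 n, (a k : ℝ) * γ ^ (n - k)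
      = x + y * γ := by
    apply sum_rep
    intro k hk
    obtain ⟨x, y, hxy⟩ := pow_rep γ L S (by exact_mod_cast hγ2) (n - k)
    exact ⟨a k * x, a k * y, by rw [hxy]; push_cast; ring⟩
  obtain ⟨x', y', hxy'⟩ := pow_rep γ L S (by exact_mod_cast hγ2) n
  have hXY : γ * (((m * x - j * x' : ℤ) : ℝ) + ((m * y - j * y' : ℤ) : ℝ) * γ) = 1 := by
    rw [← hmain, hxy, hxy']
    push_cast
    ring
  set X : ℤ := m * x - j * x' with hXdef
  set Y : ℤ := m * y - j * y' with hYdef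
  have hlin : ((X + Y * L : ℤ) : ℝ) * γ = ((1 - Y * S : ℤ) : ℝ) := by
    push_cast
    linear_combination hXY - (Y : ℝ) * hγ2
  by_cases hd : X + Y * (L : ℤ) = 0
  · rw [hd] at hlin
    have : (Y : ℝ) * S = 1 := by push_cast at hlin ⊢; linarith
    have hYS : Y * (S : ℤ) = 1 := by exact_mod_cast this
    have hS2 : (2 : ℤ) ≤ S := by exact_mod_cast hS
    rcases le_or_gt 1 Y with hY | hY
    · nlinarith
    · have hY0 : Y ≤ 0 := by omega
      nlinarith
  · -- γ is irrational
    have hDnotsq : ¬ IsSquare (L ^ 2 + 4 * S) := not_square L S hS hLS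
    have hirr : Irrational (Real.sqrt ((L ^ 2 + 4 * S : ℕ) : ℝ)) :=
      irrational_sqrt_natCast_iff.mpr hDnotsq
    have hsqrt : Real.sqrt ((L ^ 2 + 4 * S : ℕ) : ℝ) = 2 * γ - L := by
      have hcast : ((L ^ 2 + 4 * S : ℕ) : ℝ) = (2 * γ - L) ^ 2 := by
        push_cast
        linear_combination -4 * hγ2
      rw [hcast]
      exact Real.sqrt_sq (by linarith)
    rw [hsqrt] at hirr
    have hlinR : ((X : ℝ) + (Y : ℝ) * L) * γ = 1 - (Y : ℝ) * S := by
      push_cast at hlin; linarith [hlin]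
    apply hirr
    refine ⟨((2 * (1 - Y * S) - L * (X + Y * L) : ℤ) : ℚ) / ((X + Y * L : ℤ) : ℚ), ?_⟩
    have hdR : ((X + Y * (L : ℤ) : ℤ) : ℝ) ≠ 0 := by exact_mod_cast hd
    push_cast
    push_cast at hdR
    rw [div_eq_iff hdR]
    linear_combination -2 * hlinR
end

section
/- Let L ≥ 1 and β the positive root of β² + Lβ = 1 with convergent denominators q_i (q_1 = 1, q_{i+1} = L q_i + q_{i-1}). Every positive integer N admits a representation N = Σ_{i=0}^{l} c_i q_i with integers 0 ≤ c_i ≤ L, where l is the unique index with q_l ≤ N < q_{l+1}. -/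
theorem stmt_16 (L : ℕ) (hL : 1 ≤ L)
    (q : ℕ → ℕ) (hq0 : q 0 = 0) (hq1 : q 1 = 1)
    (hqrec : ∀ i, q (i + 2) = L * q (i + 1) + q i) :
    ∀ N : ℕ, 1 ≤ N → ∃ (l : ℕ) (c : ℕ → ℕ),
      q l ≤ N ∧ N < q (l + 1) ∧ (∀ i, c i ≤ L) ∧
      N = ∑ i ∈ Finset.range (l + 1), c i * q i := by
  classical
  have hpos : ∀ n, 1 ≤ q (n + 1) := by
    intro n
    induction n with
    | zero => simp [hq1]
    | succ n ih =>
      rw [hqrec]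
      calc 1 ≤ q (n+1) := ih
        _ ≤ L * q (n+1) := Nat.le_mul_of_pos_left _ hL
        _ ≤ _ := Nat.le_add_right _ _
  have hmono : Monotone q := by
    apply monotone_nat_of_le_succ
    intro n
    cases n with
    | zero => simp [hq0]
    | succ n =>
      rw [hqrec]
      calc q (n+1) ≤ L * q (n+1) := Nat.le_mul_of_pos_left _ hL
        _ ≤ _ := Nat.le_add_right _ _
  have hgrow : ∀ n, n + 1 ≤ q (n + 2) := by
    intro n
    induction n with
    | zero =>
      rw [hqrec]; rw [hq0, hq1]; omega
    | succ n ih =>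
      have h1 := hpos n
      have h0 : q (n+3) = L * q (n+2) + q (n+1) := hqrec (n+1)
      have h2 : q (n+2) ≤ L * q (n+2) := Nat.le_mul_of_pos_left _ hL
      show n + 2 ≤ q (n + 3)
      omega
  intro N
  induction N using Nat.strong_induction_on with
  | _ N IH =>
    intro hN
    have hP1 : q 1 ≤ N := by rw [hq1]; exact hN
    set l := Nat.findGreatest (fun l => q l ≤ N) (N+1) with hldef
    have hl1 : 1 ≤ l := Nat.le_findGreatest (by omega) hP1
    have hql : q l ≤ N := by
      have h := Nat.findGreatest_spec (P := fun l => q l ≤ N) (m := 1) (n := N+1)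
        (by omega) hP1
      exact h
    have hlt : N < q (l + 1) := by
      by_cases h : l + 1 ≤ N + 1
      · have hg := Nat.findGreatest_is_greatest (P := fun l => q l ≤ N)
          (n := N+1) (k := l+1) (by omega) h
        exact Nat.lt_of_not_le hg
      · have h2 : N + 2 ≤ l + 1 := by omega
        calc N < N + 1 := by omega
          _ ≤ q (N + 2) := hgrow N
          _ ≤ q (l + 1) := hmono h2
    have hqlpos : 1 ≤ q l := by
      have := hmono hl1; rw [hq1] at this; exact this
    obtain ⟨m, hm⟩ : ∃ m, l = m + 1 := ⟨l - 1, by omega⟩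
    have hrec : q (l + 1) = L * q l + q m := by rw [hm]; exact hqrec m
    have hmle : q m ≤ q l := hmono (by omega)
    set a := N / q l with hadef
    set r := N % q l with hrdef
    have hdm : q l * a + r = N := Nat.div_add_mod N (q l)
    have hrlt : r < q l := Nat.mod_lt _ hqlpos
    have ha : a ≤ L := by
      have h1 : N < (L + 1) * q l := by
        calc N < q (l+1) := hlt
          _ = L * q l + q m := hrec
          _ ≤ L * q l + q l := by omega
          _ = (L+1) * q l := by ring
      have h2 := (Nat.div_lt_iff_lt_mul hqlpos).mpr h1
      omega
    by_cases hr : r = 0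
    · refine ⟨l, fun i => if i = l then a else 0, hql, hlt, ?_, ?_⟩
      · intro i; by_cases h : i = l <;> simp [h, ha]
      · rw [Finset.sum_range_succ]
        have h1 : ∑ i ∈ Finset.range l, (if i = l then a else 0) * q i = 0 := by
          apply Finset.sum_eq_zero
          intro i hi
          simp only [Finset.mem_range] at hi
          have : i ≠ l := by omega
          simp [this]
        rw [h1]
        have hcl : (if l = l then a else 0) = a := by simp
        show N = 0 + (if l = l then a else 0) * q l
        rw [hcl, zero_add]
        calc N = q l * a := by omega
          _ = a * q l := mul_comm _ _
    · have hr1 : 1 ≤ r := by omega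
      have hrN : r < N := by omega
      obtain ⟨l', c', h1, h2, h3, h4⟩ := IH r hrN hr1
      have hl'l : l' < l := by
        by_contra h
        push_neg at h
        have := hmono h
        omega
      refine ⟨l, fun i => if i = l then a else if i ≤ l' then c' i else 0,
        hql, hlt, ?_, ?_⟩
      · intro i
        by_cases hi : i = l
        · simp [hi, ha]
        · by_cases hi' : i ≤ l' <;> simp [hi, hi', h3 i]
      · rw [Finset.sum_range_succ]
        have hsub : Finset.range (l'+1) ⊆ Finset.range l :=
          Finset.range_subset_range.mpr (by omega)
        have e1 : ∑ i ∈ Finset.range l,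
            (if i = l then a else if i ≤ l' then c' i else 0) * q i
            = ∑ i ∈ Finset.range (l'+1), c' i * q i := by
          rw [← Finset.sum_subset hsub]
          · apply Finset.sum_congr rfl
            intro i hi
            simp only [Finset.mem_range] at hi
            have hil : i ≠ l := by omega
            have hil' : i ≤ l' := by omega
            simp [hil, hil']
          · intro x hx hx'
            simp only [Finset.mem_range] at hx hx'
            have h5 : x ≠ l := by omega
            have h6 : ¬ x ≤ l' := by omega
            simp [h5, h6]
        rw [e1, ← h4]
        have hcl : (if l = l then a else if l ≤ l' then c' l else 0) = a := by simp
        show N = r + (if l = l then a else if l ≤ l' then c' l else 0) * q l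
        rw [hcl]
        have hcm : q l * a = a * q l := mul_comm _ _
        omega
end

section
/- Let L ≥ 1, β the positive root of β² + Lβ = 1, and (ξ_n) the LS-sequence with parameters (L, 1). Then the set of points of the LS-sequence equals the set { {mβ} : m ∈ ℤ }, i.e., the LS-sequence for S = 1 is a reordering of the symmetrized Kronecker sequence with parameter β. -/
open scoped BigOperators

/-- The set of points of the `LS`-sequence with parameters `(L, 1)`: finite sums
`∑ αₖ βᵏ` (k ≥ 1) with digits `0 ≤ αₖ ≤ L` subject to the admissibility condition
that a digit equal to `L` is followed by the digit `0`. -/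
def LSpoints (L : ℕ) (β : ℝ) : Set ℝ :=
  { x | ∃ (n : ℕ) (a : ℕ → ℕ), (∀ k, a k ≤ L) ∧ (∀ k, a k = L → a (k + 1) = 0) ∧
      x = ∑ k ∈ Finset.Icc 1 n, (a k : ℝ) * β ^ k }

private lemma LS_sum_lt_one {L : ℕ} {β : ℝ} (hL : 1 ≤ L) (hβ0 : 0 < β)
    (h : β ^ 2 + (L : ℝ) * β = 1) :
    ∀ n (d : ℕ → ℕ), (∀ k, d k ≤ L) → (∀ k, d k = L → d (k + 1) = 0) →
      ∑ i ∈ Finset.range n, (d i : ℝ) * β ^ (i + 1) < 1 := by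
  have hL1 : (1 : ℝ) ≤ L := by exact_mod_cast hL
  have hβ1 : β < 1 := by nlinarith
  have hLβ : (L : ℝ) * β < 1 := by nlinarith
  intro n
  induction n using Nat.strong_induction_on with
  | _ n ih =>
    match n with
    | 0 => intro d _ _; simp
    | Nat.succ m =>
      intro d hd1 hd2
      rw [Finset.sum_range_succ']
      by_cases hc : d 0 = L
      · have h1 : d 1 = 0 := hd2 0 hc
        match m with
        | 0 =>
          simp only [Finset.range_zero, Finset.sum_empty, zero_add, pow_one, hc]
          nlinarith
        | Nat.succ p =>
          rw [Finset.sum_range_succ']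
          have T : ∑ i ∈ Finset.range p, ((d (i + 2) : ℝ)) * β ^ (i + 1) < 1 :=
            ih p (by omega) (fun i => d (i + 2)) (fun k => hd1 _) (fun k hk => hd2 _ hk)
          have key : ∑ i ∈ Finset.range p, (d (i + 1 + 1) : ℝ) * β ^ (i + 1 + 1 + 1)
              = β ^ 2 * ∑ i ∈ Finset.range p, (d (i + 2) : ℝ) * β ^ (i + 1) := by
            rw [Finset.mul_sum]
            exact Finset.sum_congr rfl fun i _ => by ring
          rw [key]
          have hβ2 : (0:ℝ) < β ^ 2 := by positivity
          have hT2 : β ^ 2 * ∑ i ∈ Finset.range p, (d (i + 2) : ℝ) * β ^ (i + 1) < β ^ 2 := by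
            nlinarith
          simp only [zero_add, pow_one, hc, h1, Nat.cast_zero, zero_mul, add_zero]
          nlinarith
      · have hdlt : d 0 < L := lt_of_le_of_ne (hd1 0) hc
        have T : ∑ i ∈ Finset.range m, ((d (i + 1) : ℝ)) * β ^ (i + 1) < 1 :=
          ih m (by omega) (fun i => d (i + 1)) (fun k => hd1 _) (fun k hk => hd2 _ hk)
        have key : ∑ i ∈ Finset.range m, (d (i + 1) : ℝ) * β ^ (i + 1 + 1)
            = β * ∑ i ∈ Finset.range m, (d (i + 1) : ℝ) * β ^ (i + 1) := by
          rw [Finset.mul_sum]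
          exact Finset.sum_congr rfl fun i _ => by ring
        rw [key]
        have hd0 : (d 0 : ℝ) ≤ (L : ℝ) - 1 := by
          have : (d 0 : ℕ) + 1 ≤ L := hdlt
          have := (Nat.cast_le (α := ℝ)).mpr this
          push_cast at this
          linarith
        have hβT : β * ∑ i ∈ Finset.range m, (d (i + 1) : ℝ) * β ^ (i + 1) < β := by
          nlinarith
        have hd0β : (d 0 : ℝ) * β ≤ ((L : ℝ) - 1) * β := by
          nlinarith
        simp only [zero_add, pow_one]
        nlinarith

private lemma LS_fract_mem {L : ℕ} {β : ℝ} (hL : 1 ≤ L) (hβ0 : 0 < β)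
    (h : β ^ 2 + (L : ℝ) * β = 1) (m : ℤ) :
    ∃ (n : ℕ) (a : ℕ → ℕ), (∀ k, a k ≤ L) ∧ (∀ k, a k = L → a (k + 1) = 0) ∧
      Int.fract ((m : ℝ) * β) = ∑ k ∈ Finset.Icc 1 n, (a k : ℝ) * β ^ k := by
  have hL1 : (1 : ℝ) ≤ L := by exact_mod_cast hL
  have hβ1 : β < 1 := by nlinarith
  have hβne : β ≠ 0 := ne_of_gt hβ0
  have hinv : ((L : ℝ) + β) * β = 1 := by linear_combination h
  suffices H : ∀ N : ℕ, ∀ m : ℤ, 2 * m.natAbs + (if m < 0 then 1 else 0) ≤ N →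
      ∃ (n : ℕ) (a : ℕ → ℕ), (∀ k, a k ≤ L) ∧ (∀ k, a k = L → a (k + 1) = 0) ∧
        Int.fract ((m : ℝ) * β) = ∑ k ∈ Finset.Icc 1 n, (a k : ℝ) * β ^ k by
    exact H _ m le_rfl
  intro N
  induction N with
  | zero =>
    intro m hm
    have hm0 : m = 0 := by split_ifs at hm <;> omega
    subst hm0
    exact ⟨0, fun _ => 0, fun k => Nat.zero_le _, fun k _ => rfl, by simp⟩
  | succ N ihN =>
    intro m hm
    rcases eq_or_ne m 0 with rfl | hm0
    · exact ⟨0, fun _ => 0, fun k => Nat.zero_le _, fun k _ => rfl, by simp⟩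
    · have hdec : 2 * (-⌊(m : ℝ) * β⌋).natAbs + (if -⌊(m : ℝ) * β⌋ < 0 then 1 else 0) ≤ N := by
        rcases lt_or_gt_of_ne hm0 with hneg | hpos
        · have hmr : (m : ℝ) < 0 := by exact_mod_cast hneg
          have h1 : ⌊(m : ℝ) * β⌋ < 0 := by
            rw [Int.floor_lt]
            push_cast
            nlinarith
          have h2 : m ≤ ⌊(m : ℝ) * β⌋ := by
            rw [Int.le_floor]
            nlinarith
          split_ifs at hm ⊢ <;> omega
        · have hmr : (1 : ℝ) ≤ (m : ℝ) := by exact_mod_cast hpos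
          have h1 : 0 ≤ ⌊(m : ℝ) * β⌋ := by
            rw [Int.le_floor]
            push_cast
            nlinarith
          have h2 : ⌊(m : ℝ) * β⌋ < m := by
            rw [Int.floor_lt]
            nlinarith
          split_ifs at hm ⊢ <;> omega
      obtain ⟨Nb, b, hb1, hb2, hbsum⟩ := ihN (-⌊(m : ℝ) * β⌋) hdec
      set x := Int.fract ((m : ℝ) * β) with hxdef
      have hx0 : 0 ≤ x := Int.fract_nonneg _
      have hx1 : x < 1 := Int.fract_lt_one _
      have hxeq : x = (m : ℝ) * β - (⌊(m : ℝ) * β⌋ : ℝ) := rfl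
      have hxdiv : x / β = ((m + (-⌊(m : ℝ) * β⌋) * L : ℤ) : ℝ) + ((-⌊(m : ℝ) * β⌋ : ℤ) : ℝ) * β := by
        rw [div_eq_iff hβne, hxeq]
        push_cast
        linear_combination (⌊(m : ℝ) * β⌋ : ℝ) * h
      have hyx : Int.fract (x / β) = Int.fract (((-⌊(m : ℝ) * β⌋ : ℤ) : ℝ) * β) := by
        rw [hxdiv, Int.fract_intCast_add]
      have hq0 : 0 ≤ x / β := div_nonneg hx0 hβ0.le
      have hfl0 : 0 ≤ ⌊x / β⌋ := Int.le_floor.mpr (by exact_mod_cast hq0)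
      have hxβlt : x / β < (L : ℝ) + β := by
        rw [div_lt_iff₀ hβ0]
        nlinarith
      have hflL : ⌊x / β⌋ ≤ (L : ℤ) := by
        have h5 : x / β < ((L : ℤ) + 1 : ℤ) := by
          push_cast
          nlinarith
        have := Int.floor_lt.mpr h5
        omega
      have hAcast : ((⌊x / β⌋.toNat : ℕ) : ℝ) = (⌊x / β⌋ : ℝ) := by
        exact_mod_cast Int.toNat_of_nonneg hfl0
      have hAL : ⌊x / β⌋.toNat ≤ L := by omega
      set y := Int.fract (x / β) with hydef
      have hy0 : 0 ≤ y := Int.fract_nonneg _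
      have hyeq : y = x / β - (⌊x / β⌋ : ℝ) := rfl
      have hxy : x = ((⌊x / β⌋.toNat : ℝ) + y) * β := by
        rw [hAcast, hyeq]
        field_simp
        ring
      set b' : ℕ → ℕ := fun k => if 1 ≤ k ∧ k ≤ Nb then b k else 0 with hb'def
      have hb'1 : ∀ k, b' k ≤ L := by
        intro k
        by_cases hk : 1 ≤ k ∧ k ≤ Nb <;> simp [b', hk]
        · exact hb1 k
      have hb'2 : ∀ k, b' k = L → b' (k + 1) = 0 := by
        intro k hk
        simp only [b'] at hk ⊢
        split_ifs at hk with h1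
        · have h2 := hb2 k hk
          split_ifs <;> simp [h2]
        · omega
      have hb'sum : y = ∑ k ∈ Finset.Icc 1 Nb, (b' k : ℝ) * β ^ k := by
        rw [hyx, hbsum]
        refine Finset.sum_congr rfl fun k hk => ?_
        rw [Finset.mem_Icc] at hk
        simp [b', hk.1, hk.2]
      have hyr : y = ∑ i ∈ Finset.range Nb, (b' (1 + i) : ℝ) * β ^ (1 + i) := by
        rw [hb'sum, ← Finset.Ico_add_one_right_eq_Icc, Finset.sum_Ico_eq_sum_range]
        simp only [Nat.add_sub_cancel]
      have hbL : ⌊x / β⌋.toNat = L → b' 1 = 0 := by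
        intro hA
        rcases Nat.eq_zero_or_pos Nb with h0 | hpos
        · simp [b', h0]
        · by_contra hne
          have h1b : 1 ≤ b' 1 := Nat.one_le_iff_ne_zero.mpr hne
          have h1br : (1 : ℝ) ≤ (b' 1 : ℝ) := by exact_mod_cast h1b
          have hterm : (b' 1 : ℝ) * β ^ 1 ≤ y := by
            rw [hb'sum]
            exact Finset.single_le_sum (f := fun k => (b' k : ℝ) * β ^ k)
              (fun i _ => by positivity) (Finset.mem_Icc.mpr ⟨le_rfl, hpos⟩)
          have hylt : y < β := by
            have hAr : (⌊x / β⌋ : ℝ) = (L : ℝ) := by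
              rw [← hAcast, hA]
            rw [hyeq, hAr]
            linarith
          nlinarith
      refine ⟨Nb + 1, fun k => if k = 1 then ⌊x / β⌋.toNat else b' (k - 1), ?_, ?_, ?_⟩
      · intro k
        by_cases hk : k = 1
        · simp only [if_pos hk]; exact hAL
        · simp only [if_neg hk]; exact hb'1 _
      · intro k hk
        match k with
        | 0 =>
          exfalso
          simp only [show (0 : ℕ) ≠ 1 from by omega, if_neg, if_false] at hk
          simp [b'] at hk
          omega
        | 1 =>
          simp only [if_pos rfl] at hk
          simp only [show (1 + 1 : ℕ) ≠ 1 from by omega, if_neg, if_false]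
          exact hbL hk
        | (k + 2) =>
          simp only [show (k + 2 : ℕ) ≠ 1 from by omega, show (k + 2 + 1 : ℕ) ≠ 1 from by omega,
            if_neg, if_false] at hk ⊢
          simp only [show (k + 2 - 1 : ℕ) = k + 1 from by omega,
            show (k + 2 + 1 - 1 : ℕ) = k + 2 from by omega] at hk ⊢
          exact hb'2 _ hk
      · rw [← Finset.Ico_add_one_right_eq_Icc, Finset.sum_Ico_eq_sum_range]
        simp only [Nat.add_sub_cancel]
        rw [Finset.sum_range_succ']
        have e2 : ∀ i ∈ Finset.range Nb,
            (((if 1 + (i + 1) = 1 then ⌊x / β⌋.toNat else b' (1 + (i + 1) - 1)) : ℕ) : ℝ)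
              * β ^ (1 + (i + 1))
            = β * ((b' (1 + i) : ℝ) * β ^ (1 + i)) := by
          intro i _
          rw [if_neg (by omega), show (1 + (i + 1) - 1 : ℕ) = 1 + i from by omega]
          ring_nf
        rw [Finset.sum_congr rfl e2, ← Finset.mul_sum, ← hyr]
        norm_num
        linear_combination hxy

theorem stmt_17 (L : ℕ) (hL : 1 ≤ L) (β : ℝ) (hβ0 : 0 < β)
    (h : β ^ 2 + (L : ℝ) * β = 1) :
    LSpoints L β = { y : ℝ | ∃ m : ℤ, y = Int.fract ((m : ℝ) * β) } := by
  ext x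
  simp only [LSpoints, Set.mem_setOf_eq]
  constructor
  · rintro ⟨n, a, ha1, ha2, rfl⟩
    have hx' : ∑ k ∈ Finset.Icc 1 n, (a k : ℝ) * β ^ k
        = ∑ i ∈ Finset.range n, (a (1 + i) : ℝ) * β ^ (1 + i) := by
      rw [← Finset.Ico_add_one_right_eq_Icc, Finset.sum_Ico_eq_sum_range]
      simp only [Nat.add_sub_cancel]
    have hx0 : 0 ≤ ∑ k ∈ Finset.Icc 1 n, (a k : ℝ) * β ^ k :=
      Finset.sum_nonneg fun i _ => by positivity
    have hx1 : ∑ k ∈ Finset.Icc 1 n, (a k : ℝ) * β ^ k < 1 := by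
      rw [hx']
      have := LS_sum_lt_one hL hβ0 h n (fun i => a (1 + i)) (fun k => ha1 _)
        (fun k hk => by
          have := ha2 _ hk
          simpa [show 1 + k + 1 = 1 + (k + 1) from by omega] using this)
      calc ∑ i ∈ Finset.range n, (a (1 + i) : ℝ) * β ^ (1 + i)
          = ∑ i ∈ Finset.range n, (a (1 + i) : ℝ) * β ^ (i + 1) := by
            exact Finset.sum_congr rfl fun i _ => by rw [Nat.add_comm 1 i]
        _ < 1 := this
    have hrep : ∀ k : ℕ, ∃ p q : ℤ, β ^ (1 + k) = (p : ℝ) + (q : ℝ) * β := by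
      intro k
      induction k with
      | zero => exact ⟨0, 1, by simp⟩
      | succ k ih =>
        obtain ⟨p, q, hpq⟩ := ih
        refine ⟨q, p - q * L, ?_⟩
        have hstep : β ^ (1 + (k + 1)) = β ^ (1 + k) * β := by
          rw [← Nat.add_assoc]
          exact pow_succ β (1 + k)
        rw [hstep, hpq]
        push_cast
        linear_combination (q : ℝ) * h
    choose p q hpq using hrep
    refine ⟨∑ i ∈ Finset.range n, (a (1 + i) : ℤ) * q i, ?_⟩
    have hPQ : ∑ k ∈ Finset.Icc 1 n, (a k : ℝ) * β ^ k
        = ((∑ i ∈ Finset.range n, (a (1 + i) : ℤ) * p i : ℤ) : ℝ)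
          + ((∑ i ∈ Finset.range n, (a (1 + i) : ℤ) * q i : ℤ) : ℝ) * β := by
      rw [hx']
      push_cast
      rw [Finset.sum_mul, ← Finset.sum_add_distrib]
      exact Finset.sum_congr rfl fun i _ => by rw [hpq i]; ring
    rw [show ((∑ i ∈ Finset.range n, (a (1 + i) : ℤ) * q i : ℤ) : ℝ) * β
        = (∑ k ∈ Finset.Icc 1 n, (a k : ℝ) * β ^ k)
          - ((∑ i ∈ Finset.range n, (a (1 + i) : ℤ) * p i : ℤ) : ℝ) from by linarith,
      Int.fract_sub_intCast, Int.fract_eq_self.mpr ⟨hx0, hx1⟩]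
  · rintro ⟨m, rfl⟩
    exact LS_fract_mem hL hβ0 h m
end
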